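/- arXiv:2202.12381 — 6 statements merged into one kernel-verified Lean document; each statement's English description precedes it below -/
import Mathlib

section
/- For Chebyshev polynomials of the second kind, for all x in (-1,1) and all k ≥ 1, |U_k(x) - U_{k-1}(x)| ≤ √(2/(1+x)). -/
/-!
Writing `x = cos θ` with `0 < θ < π`, the difference `U_k - U_{k-1}` is the Chebyshev polynomial
of the third kind: `sin ((k+1)θ) - sin (kθ) = 2 sin (θ/2) cos ((k+½)θ)` and
`sin θ = 2 sin (θ/2) cos (θ/2)` give `(U_k - U_{k-1})(cos θ) = cos ((k+½)θ) / cos (θ/2)`.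
Its absolute value is at most `1 / cos (θ/2) = √(2 / (1 + x))`.
-/

open Real Polynomial.Chebyshev

theorem chebyshevU_sub_eval_cos_mul_cos_half {θ : ℝ} (hθ : sin (θ / 2) ≠ 0) (n : ℤ) :
    ((U ℝ n).eval (cos θ) - (U ℝ (n - 1)).eval (cos θ)) * cos (θ / 2) =
      cos ((n + 1 / 2) * θ) := by
  have hsin : sin θ = 2 * sin (θ / 2) * cos (θ / 2) := by
    rw [← sin_two_mul, mul_div_cancel₀ θ two_ne_zero]
  have hU := U_real_cos θ n
  have hU' := U_real_cos θ (n - 1)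
  push_cast at hU'
  refine mul_left_cancel₀ (mul_ne_zero two_ne_zero hθ) ?_
  calc 2 * sin (θ / 2) * (((U ℝ n).eval (cos θ) - (U ℝ (n - 1)).eval (cos θ)) * cos (θ / 2))
      = (U ℝ n).eval (cos θ) * sin θ - (U ℝ (n - 1)).eval (cos θ) * sin θ := by
        rw [hsin]; ring
    _ = sin ((n + 1) * θ) - sin (n * θ) := by rw [hU, hU', sub_add_cancel]
    _ = 2 * sin (θ / 2) * cos ((n + 1 / 2) * θ) := by rw [sin_sub_sin]; ring_nf

theorem cos_half_arccos_sq {x : ℝ} (hx₁ : -1 ≤ x) (hx₂ : x ≤ 1) :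
    cos (arccos x / 2) ^ 2 = (1 + x) / 2 := by
  rw [cos_sq, mul_div_cancel₀ _ two_ne_zero, cos_arccos hx₁ hx₂]
  ring

theorem chebyshevU_sub_abs_le_general (k : ℕ) :
    ∀ x ∈ Set.Ioo (-1 : ℝ) 1,
      |(Polynomial.Chebyshev.U ℝ k).eval x - (Polynomial.Chebyshev.U ℝ ((k : ℤ) - 1)).eval x| ≤
        Real.sqrt (2 / (1 + x)) := by
  rintro x ⟨hx₁, hx₂⟩
  set θ := arccos x
  have hsin : 0 < sin (θ / 2) :=
    sin_pos_of_pos_of_lt_pi (half_pos (arccos_pos.2 hx₂)) (by linarith [arccos_le_pi x, pi_pos])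
  have key := chebyshevU_sub_eval_cos_mul_cos_half hsin.ne' k
  rw [cos_arccos hx₁.le hx₂.le] at key
  set V := (U ℝ k).eval x - (U ℝ ((k : ℤ) - 1)).eval x
  apply le_sqrt_of_sq_le
  rw [le_div_iff₀ (by linarith), sq_abs]
  calc V ^ 2 * (1 + x) = 2 * (V * cos (θ / 2)) ^ 2 := by
        rw [mul_pow, cos_half_arccos_sq hx₁.le hx₂.le]; ring
    _ = 2 * cos ((k + 1 / 2) * θ) ^ 2 := by rw [key]; push_cast; ring_nf
    _ ≤ 2 := by nlinarith [cos_sq_le_one ((k + 1 / 2) * θ)]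

theorem chebyshevU_sub_abs_le (k : ℕ) (hk : 1 ≤ k) :
    ∀ x ∈ Set.Ioo (-1 : ℝ) 1,
      |(Polynomial.Chebyshev.U ℝ k).eval x - (Polynomial.Chebyshev.U ℝ ((k : ℤ) - 1)).eval x| ≤
        Real.sqrt (2 / (1 + x)) :=
  chebyshevU_sub_abs_le_general k
end

section
/- Let B be a bounded self-adjoint operator on a Hilbert space with spectrum contained in [0, (1+τ²ν)^{-1/2}] for some τ, ν > 0, and let U_k denote the Chebyshev polynomial of the second kind. Then ‖B·U_k(B)‖ ≤ 1/(τ√ν). -/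
open Polynomial Real

lemma chebyshevU_scalar_bound (τ ν : ℝ) (hτ : 0 < τ) (hν : 0 < ν) (k : ℕ) {x : ℝ}
    (hx0 : 0 ≤ x) (hxs : x ≤ (Real.sqrt (1 + τ ^ 2 * ν))⁻¹) :
    |x * (Polynomial.Chebyshev.U ℝ k).eval x| ≤ 1 / (τ * Real.sqrt ν) := by
  have hpos : (0:ℝ) < 1 + τ ^ 2 * ν := by positivity
  have hs1 : (1:ℝ) < Real.sqrt (1 + τ ^ 2 * ν) := by
    rw [Real.lt_sqrt (by norm_num)]
    nlinarith [mul_pos (pow_pos hτ 2) hν]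
  have hx1 : x < 1 := lt_of_le_of_lt hxs (by rw [inv_lt_one_iff₀]; right; exact hs1)
  have hx2 : (0:ℝ) < 1 - x ^ 2 := by nlinarith
  have hsin : Real.sin (Real.arccos x) = Real.sqrt (1 - x ^ 2) := by
    rw [Real.sin_arccos]
  have hsinpos : 0 < Real.sin (Real.arccos x) := by rw [hsin]; positivity
  have hcos : Real.cos (Real.arccos x) = x :=
    Real.cos_arccos (by linarith) (le_of_lt hx1)
  have hU := Polynomial.Chebyshev.U_real_cos (Real.arccos x) k
  rw [hcos] at hU
  have habs : |x * (Polynomial.Chebyshev.U ℝ k).eval x| * Real.sin (Real.arccos x) ≤ x := by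
    rw [← abs_of_pos hsinpos, ← abs_mul, mul_assoc, hU, abs_mul, abs_of_nonneg hx0]
    exact mul_le_of_le_one_right hx0 (Real.abs_sin_le_one _)
  have h1 : |x * (Polynomial.Chebyshev.U ℝ k).eval x| ≤ x / Real.sqrt (1 - x ^ 2) := by
    rw [← hsin, le_div_iff₀ hsinpos]
    exact habs
  have hxsq : x ^ 2 ≤ (1 + τ ^ 2 * ν)⁻¹ := by
    have h := pow_le_pow_left₀ hx0 hxs 2
    rwa [inv_pow, Real.sq_sqrt hpos.le] at h
  have h3 : x ^ 2 * (1 + τ ^ 2 * ν) ≤ 1 := by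
    have := mul_le_mul_of_nonneg_right hxsq hpos.le
    rwa [inv_mul_cancel₀ hpos.ne'] at this
  have h2 : x / Real.sqrt (1 - x ^ 2) ≤ 1 / (τ * Real.sqrt ν) := by
    rw [div_le_div_iff₀ (by positivity) (by positivity), one_mul]
    rw [show x * (τ * Real.sqrt ν) = x * τ * Real.sqrt ν by ring]
    have hle : (x * τ * Real.sqrt ν) ^ 2 ≤ 1 - x ^ 2 := by
      nlinarith [Real.sq_sqrt hν.le, Real.sqrt_nonneg ν]
    calc x * τ * Real.sqrt ν = Real.sqrt ((x * τ * Real.sqrt ν) ^ 2) := by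
          rw [Real.sqrt_sq (by positivity)]
      _ ≤ Real.sqrt (1 - x ^ 2) := Real.sqrt_le_sqrt hle
  exact h1.trans h2

theorem norm_mul_chebyshevU_le {H : Type*} [NormedAddCommGroup H] [InnerProductSpace ℂ H]
    [CompleteSpace H] (B : H →L[ℂ] H) (hB : IsSelfAdjoint B)
    (τ ν : ℝ) (hτ : 0 < τ) (hν : 0 < ν)
    (hsp : spectrum ℝ B ⊆ Set.Icc 0 ((Real.sqrt (1 + τ ^ 2 * ν))⁻¹)) (k : ℕ) :
    ‖B * Polynomial.aeval B (Polynomial.Chebyshev.U ℂ k)‖ ≤ 1 / (τ * Real.sqrt ν) := by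
  have key : B * Polynomial.aeval B (Polynomial.Chebyshev.U ℂ k)
      = cfc (fun x : ℝ => (X * Polynomial.Chebyshev.U ℝ k).eval x) B := by
    rw [← Polynomial.Chebyshev.map_U (algebraMap ℝ ℂ) (k:ℤ), Polynomial.aeval_map_algebraMap,
      cfc_polynomial (X * Polynomial.Chebyshev.U ℝ k) B, map_mul, Polynomial.aeval_X]
  rw [key]
  apply norm_cfc_le (by positivity)
  intro x hx
  obtain ⟨h0, h1⟩ := hsp hx
  simp only [Polynomial.eval_mul, Polynomial.eval_X, Real.norm_eq_abs]
  exact chebyshevU_scalar_bound τ ν hτ hν k h0 h1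
end

section
/- Let B be a bounded self-adjoint operator with spectrum in [0,1]. Then ‖U_k(B) - B·U_{k-1}(B)‖ ≤ 1 and ‖B·U_k(B) - U_{k-1}(B)‖ ≤ 1, where U_k is the Chebyshev polynomial of the second kind. -/
open Polynomial Polynomial.Chebyshev

lemma aux_normT {H : Type*} [NormedAddCommGroup H] [InnerProductSpace ℂ H]
    [CompleteSpace H] (B : H →L[ℂ] H) (hB : IsSelfAdjoint B)
    (hsp : spectrum ℝ B ⊆ Set.Icc 0 1) (n : ℤ) :
    ‖Polynomial.aeval B (Polynomial.Chebyshev.T ℂ n)‖ ≤ 1 := by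
  rw [← map_T (algebraMap ℝ ℂ) n, aeval_map_algebraMap,
    ← cfc_polynomial (T ℝ n) B hB]
  refine norm_cfc_le zero_le_one fun x hx => ?_
  obtain ⟨h0, h1⟩ := hsp hx
  have hx1 : -1 ≤ x := by linarith
  have : x = Real.cos (Real.arccos x) := (Real.cos_arccos hx1 h1).symm
  rw [this, T_real_cos]
  simpa using Real.abs_cos_le_one _

theorem norm_chebyshevU_sub_le {H : Type*} [NormedAddCommGroup H] [InnerProductSpace ℂ H]
    [CompleteSpace H] (B : H →L[ℂ] H) (hB : IsSelfAdjoint B)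
    (hsp : spectrum ℝ B ⊆ Set.Icc 0 1) (k : ℕ) (hk : 1 ≤ k) :
    ‖Polynomial.aeval B (Polynomial.Chebyshev.U ℂ k) -
        B * Polynomial.aeval B (Polynomial.Chebyshev.U ℂ ((k : ℤ) - 1))‖ ≤ 1 ∧
      ‖B * Polynomial.aeval B (Polynomial.Chebyshev.U ℂ k) -
        Polynomial.aeval B (Polynomial.Chebyshev.U ℂ ((k : ℤ) - 1))‖ ≤ 1 := by
  constructor
  · have h : Polynomial.aeval B (U ℂ k) - B * Polynomial.aeval B (U ℂ ((k : ℤ) - 1))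
        = Polynomial.aeval B (T ℂ k) := by
      rw [T_eq_U_sub_X_mul_U ℂ (k : ℤ), map_sub, map_mul, aeval_X]
    rw [h]; exact aux_normT B hB hsp k
  · have h : B * Polynomial.aeval B (U ℂ k) - Polynomial.aeval B (U ℂ ((k : ℤ) - 1))
        = Polynomial.aeval B (T ℂ ((k : ℤ) + 1)) := by
      have hp : (X : ℂ[X]) * U ℂ k - U ℂ ((k : ℤ) - 1) = T ℂ ((k : ℤ) + 1) := by
        have h1 := T_eq_U_sub_X_mul_U ℂ ((k : ℤ) + 1)
        have h2 := U_add_two ℂ ((k : ℤ) - 1)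
        rw [show (k : ℤ) - 1 + 2 = (k : ℤ) + 1 from by ring,
          show (k : ℤ) - 1 + 1 = (k : ℤ) from by ring] at h2
        rw [show (k : ℤ) + 1 - 1 = (k : ℤ) from by ring] at h1
        linear_combination -h1 - h2
      rw [← hp, map_sub, map_mul, aeval_X]
    rw [h]; exact aux_normT B hB hsp _
end

section
/- Let A_j be self-adjoint with A_j ≥ α_j I (α_j > 0), η_j ∈ (0,1), τ > 0, S_j = (I + τ²η_j^{-1}A_j)^{-1}, and S = Σ_{j=1}^m η_j S_j with Σ η_j = 1. Then for each j and all f ∈ H: ‖(I - S)^{-1/2}(I - S_j) f‖ ≤ η_j^{-1/2}‖(I - S_j)^{1/2} f‖ ≤ η_j^{-1/2}‖f‖. -/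
/-!
Write `B = 1 - S_j` and `C = 1 - S = ∑ i, η_i (1 - S_i)`. Each `S_i` is the inverse of
`1 + X_i` with `X_i ≥ 0`, so `0 ≤ S_i ≤ 1` and hence `η_j B ≤ C`. Conjugating by
`√T = C^{-1/2}` gives `√T B √T ≤ η_j⁻¹`, i.e. `‖√T √B‖ ≤ η_j^{-1/2}` by the C⋆-identity,
and `√T (B f) = (√T √B) (√B f)`. The second inequality is `‖√B‖ ≤ 1`, from `0 ≤ B ≤ 1`.
-/

open CFC

section CStarAlgebra

variable {A : Type*} [CStarAlgebra A] [PartialOrder A] [StarOrderedRing A]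

theorem inverse_one_add_mem_Icc {x s : A} (hx : 0 ≤ x) (hs : s * (1 + x) = 1)
    (hs' : (1 + x) * s = 1) : s ∈ Set.Icc 0 1 := by
  let u : Aˣ := ⟨1 + x, s, hs', hs⟩
  have hu : (1 : A) ≤ u := le_add_of_nonneg_right hx
  exact ⟨CFC.inv_nonneg_of_nonneg u (zero_le_one.trans hu), CStarAlgebra.inv_le_one hu⟩

theorem norm_sqrt_le_one {b : A} (hb : b ∈ Set.Icc 0 1) : ‖sqrt b‖ ≤ 1 := by
  have h : sqrt b ≤ 1 := by simpa using sqrt_le_sqrt b 1 hb.2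
  exact (CStarAlgebra.mem_Icc_iff_norm_le_one.1 ⟨sqrt_nonneg b, h⟩).2

theorem norm_sqrt_mul_sqrt_le_of_smul_le {b c t : A} {η : ℝ} (hη : 0 < η) (hb : 0 ≤ b)
    (hbc : η • b ≤ c) (htc : t * c = 1) (hct : c * t = 1) :
    ‖sqrt t * sqrt b‖ ≤ (√η)⁻¹ := by
  have ht : 0 ≤ t :=
    CFC.inv_nonneg_of_nonneg (⟨c, t, hct, htc⟩ : Aˣ) ((smul_nonneg hη.le hb).trans hbc)
  have hconj : sqrt t * c * sqrt t = 1 := by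
    have hcomm : Commute (sqrt t) c := by
      rw [sqrt_eq_cfc]; exact Commute.cfc_nnreal (htc.trans hct.symm) _
    rw [hcomm.eq, mul_assoc, sqrt_mul_sqrt_self t ht, hct]
  have hle : sqrt t * b * sqrt t ≤ algebraMap ℝ A η⁻¹ := by
    have : b ≤ η⁻¹ • c := by
      simpa [inv_smul_smul₀ hη.ne'] using smul_le_smul_of_nonneg_left hbc (inv_nonneg.2 hη.le)
    calc sqrt t * b * sqrt t ≤ sqrt t * (η⁻¹ • c) * sqrt t :=
          conjugate_le_conjugate_of_nonneg this (sqrt_nonneg t)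
      _ = algebraMap ℝ A η⁻¹ := by
          rw [mul_smul_comm, smul_mul_assoc, hconj, Algebra.algebraMap_eq_smul_one]
  have hnorm : ‖sqrt t * b * sqrt t‖ ≤ η⁻¹ :=
    (CStarAlgebra.norm_le_iff_le_algebraMap _ (inv_nonneg.2 hη.le)
      (conjugate_nonneg_of_nonneg hb (sqrt_nonneg t))).2 hle
  have hsq : ‖sqrt t * sqrt b‖ * ‖sqrt t * sqrt b‖ = ‖sqrt t * b * sqrt t‖ := by
    rw [← CStarRing.norm_self_mul_star, star_mul, (sqrt_nonneg b).star_eq,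
      (sqrt_nonneg t).star_eq, mul_assoc, ← mul_assoc (sqrt b), sqrt_mul_sqrt_self b hb,
      ← mul_assoc]
  rw [← Real.sqrt_inv]
  exact Real.le_sqrt_of_sq_le (by rw [sq, hsq]; exact hnorm)

end CStarAlgebra

theorem Finset.sum_smul_sub_of_sum_eq_one {ι R M : Type*} [Semiring R] [AddCommGroup M]
    [Module R M] (s : Finset ι) {η : ι → R} (hη : ∑ i ∈ s, η i = 1) (a : M) (x : ι → M) :
    ∑ i ∈ s, η i • (a - x i) = a - ∑ i ∈ s, η i • x i := by
  rw [Finset.sum_congr rfl fun i _ => smul_sub (η i) a (x i), Finset.sum_sub_distrib,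
    ← Finset.sum_smul, hη, one_smul]

set_option synthInstance.maxHeartbeats 1000000 in
theorem inv_sqrt_one_sub_S_estimate_general {H : Type*} [NormedAddCommGroup H]
    [InnerProductSpace ℂ H] [CompleteSpace H] (m : ℕ)
    (Aj : Fin m → (H →L[ℂ] H)) (hAj : ∀ j, IsSelfAdjoint (Aj j))
    (α : Fin m → ℝ) (hα : ∀ j, 0 < α j)
    (hlow : ∀ j, ∀ u : H, α j * ‖u‖ ^ 2 ≤ (inner ℂ (Aj j u) u : ℂ).re)
    (τ : ℝ)
    (η : Fin m → ℝ) (hη : ∀ j, η j ∈ Set.Ioo (0 : ℝ) 1) (hηsum : ∑ j, η j = 1)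
    (Sj : Fin m → (H →L[ℂ] H))
    (hSj : ∀ j, Sj j * (1 + (τ ^ 2 * (η j)⁻¹) • Aj j) = 1)
    (hSj' : ∀ j, (1 + (τ ^ 2 * (η j)⁻¹) • Aj j) * Sj j = 1)
    (S : H →L[ℂ] H) (hS : S = ∑ j, η j • Sj j)
    (T : H →L[ℂ] H) (hT : T * (1 - S) = 1) (hT' : (1 - S) * T = 1) :
    ∀ j, ∀ f : H,
      ‖CFC.sqrt T ((1 - Sj j) f)‖ ≤ (Real.sqrt (η j))⁻¹ * ‖CFC.sqrt (1 - Sj j) f‖ ∧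
      (Real.sqrt (η j))⁻¹ * ‖CFC.sqrt (1 - Sj j) f‖ ≤ (Real.sqrt (η j))⁻¹ * ‖f‖ := by
  intro j f
  have hA : ∀ i, 0 ≤ Aj i := fun i => (ContinuousLinearMap.nonneg_iff_isPositive _).2 <|
    ContinuousLinearMap.isPositive_def'.2
      ⟨hAj i, fun u => (mul_nonneg (hα i).le (sq_nonneg _)).trans (hlow i u)⟩
  have hB : ∀ i, 1 - Sj i ∈ Set.Icc 0 1 := fun i => by
    obtain ⟨hS0, hS1⟩ := inverse_one_add_mem_Icc
      (smul_nonneg (mul_nonneg (sq_nonneg τ) (inv_nonneg.2 (hη i).1.le)) (hA i)) (hSj i) (hSj' i)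
    exact ⟨sub_nonneg.2 hS1, sub_le_self 1 hS0⟩
  have hBS : η j • (1 - Sj j) ≤ 1 - S := by
    rw [hS, ← Finset.sum_smul_sub_of_sum_eq_one _ hηsum]
    exact Finset.single_le_sum (fun i _ => smul_nonneg (hη i).1.le (hB i).1) (Finset.mem_univ j)
  have hkey := norm_sqrt_mul_sqrt_le_of_smul_le (hη j).1 (hB j).1 hBS hT hT'
  have hcontr : ‖sqrt (1 - Sj j) f‖ ≤ ‖f‖ :=
    (ContinuousLinearMap.le_opNorm _ f).trans
      (mul_le_of_le_one_left (norm_nonneg f) (norm_sqrt_le_one (hB j)))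
  refine ⟨?_, by gcongr⟩
  calc ‖sqrt T ((1 - Sj j) f)‖ = ‖(sqrt T * sqrt (1 - Sj j)) (sqrt (1 - Sj j) f)‖ := by
        rw [mul_apply_eq_comp, ← mul_apply_eq_comp (sqrt (1 - Sj j)),
          sqrt_mul_sqrt_self _ (hB j).1]
    _ ≤ ‖sqrt T * sqrt (1 - Sj j)‖ * ‖sqrt (1 - Sj j) f‖ := ContinuousLinearMap.le_opNorm _ _
    _ ≤ (√(η j))⁻¹ * ‖sqrt (1 - Sj j) f‖ := by gcongr

set_option synthInstance.maxHeartbeats 1000000 in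
theorem inv_sqrt_one_sub_S_estimate {H : Type*} [NormedAddCommGroup H]
    [InnerProductSpace ℂ H] [CompleteSpace H] (m : ℕ) (hm : 0 < m)
    (Aj : Fin m → (H →L[ℂ] H)) (hAj : ∀ j, IsSelfAdjoint (Aj j))
    (α : Fin m → ℝ) (hα : ∀ j, 0 < α j)
    (hlow : ∀ j, ∀ u : H, α j * ‖u‖ ^ 2 ≤ (inner ℂ (Aj j u) u : ℂ).re)
    (τ : ℝ) (hτ : 0 < τ)
    (η : Fin m → ℝ) (hη : ∀ j, η j ∈ Set.Ioo (0 : ℝ) 1) (hηsum : ∑ j, η j = 1)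
    (Sj : Fin m → (H →L[ℂ] H))
    (hSj : ∀ j, Sj j * (1 + (τ ^ 2 * (η j)⁻¹) • Aj j) = 1)
    (hSj' : ∀ j, (1 + (τ ^ 2 * (η j)⁻¹) • Aj j) * Sj j = 1)
    (S : H →L[ℂ] H) (hS : S = ∑ j, η j • Sj j)
    (T : H →L[ℂ] H) (hT : T * (1 - S) = 1) (hT' : (1 - S) * T = 1) :
    ∀ j, ∀ f : H,
      ‖CFC.sqrt T ((1 - Sj j) f)‖ ≤ (Real.sqrt (η j))⁻¹ * ‖CFC.sqrt (1 - Sj j) f‖ ∧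
      (Real.sqrt (η j))⁻¹ * ‖CFC.sqrt (1 - Sj j) f‖ ≤ (Real.sqrt (η j))⁻¹ * ‖f‖ :=
  inv_sqrt_one_sub_S_estimate_general m Aj hAj α hα hlow τ η hη hηsum Sj hSj hSj' S hS T hT hT'
end

section
/- Let A_1 be self-adjoint with A_1 ≥ ν·I, ν > 0, η_1 ∈ (0,1), τ > 0, S_1 = (I + τ²η_1^{-1}A_1)^{-1}, and let S be bounded self-adjoint with I - S ≥ η_1(I - S_1) > 0. Then for all h ∈ H: ‖(I - S)^{-1/2} S_1 h‖ ≤ τ^{-1}‖A_1^{-1/2} S_1^{1/2} h‖ ≤ (τ√ν)^{-1}‖h‖. -/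
/-! Everything is an inequality in the Loewner order of the C⋆-algebra of bounded operators,
read off pointwise through `‖B h‖ ≤ r ‖C h‖ ⇐ B⋆B ≤ r² C⋆C`. Since `1 - S₁ = c A₁ S₁` with
`c = τ² / η₁`, the hypothesis on `S` says `τ² A₁ S₁ ≤ 1 - S`, so operator monotonicity of the
inverse gives `(1 - S)⁻¹ ≤ τ⁻² S₁⁻¹ A₁⁻¹`. Conjugating by `S₁`, which commutes with `A₁`, yields
`S₁ (1 - S)⁻¹ S₁ ≤ τ⁻² S₁^{1/2} A₁⁻¹ S₁^{1/2}`. Inverting `ν ≤ A₁` and `1 ≤ S₁⁻¹` in the same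
way gives `S₁^{1/2} A₁⁻¹ S₁^{1/2} ≤ ν⁻¹ S₁ ≤ ν⁻¹`. -/

open CFC

section CStarAlgebra

variable {A : Type*} [CStarAlgebra A] [PartialOrder A] [StarOrderedRing A]

lemma CStarAlgebra.inv_le_smul_inv_of_smul_le {a b : Aˣ} {r : ℝ} (hr : 0 < r)
    (ha : 0 ≤ (a : A)) (h : r • (a : A) ≤ b) : (↑b⁻¹ : A) ≤ r⁻¹ • (↑a⁻¹ : A) := by
  let ra : Aˣ := ⟨r • ↑a, r⁻¹ • ↑a⁻¹, by simp [smul_smul, hr.ne'], by simp [smul_smul, hr.ne']⟩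
  exact CStarAlgebra.inv_le_inv (a := ra) (smul_nonneg hr.le ha) h

lemma CFC.star_sqrt_mul_mul_sqrt_mul {a : A} (ha : 0 ≤ a) (b : A) :
    star (sqrt a * b) * (sqrt a * b) = star b * a * b := by
  rw [star_mul, (sqrt_nonneg a).isSelfAdjoint.star_eq, mul_assoc, ← mul_assoc (sqrt a),
    sqrt_mul_sqrt_self a ha, mul_assoc]

lemma Commute.cfcSqrt_right {a b : A} (h : Commute a b) : Commute a (sqrt b) := by
  rw [sqrt_eq_cfc]
  exact (h.symm.cfc_nnreal _).symm

lemma CStarAlgebra.conjugate_inv_le_of_smul_mul_inv_le {a p x : Aˣ} {r : ℝ} (hr : 0 < r)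
    (ha : 0 ≤ (a : A)) (hp : 0 ≤ (p : A)) (hap : Commute (a : A) p)
    (h : r • ((a : A) * ↑p⁻¹) ≤ x) :
    (↑p⁻¹ * ↑x⁻¹ * ↑p⁻¹ : A) ≤ r⁻¹ • (sqrt (↑p⁻¹ : A) * ↑a⁻¹ * sqrt (↑p⁻¹ : A)) := by
  have hp_inv : 0 ≤ (↑p⁻¹ : A) := CFC.inv_nonneg_of_nonneg p hp
  have hx_inv : (↑x⁻¹ : A) ≤ r⁻¹ • (↑p * ↑a⁻¹) :=
    inv_le_smul_inv_of_smul_le (a := a * p⁻¹) hr (hap.units_inv_right.mul_nonneg ha hp_inv) h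
  have hcomm : Commute (↑a⁻¹ : A) (sqrt (↑p⁻¹ : A)) :=
    hap.units_inv_right.units_inv_left.cfcSqrt_right
  calc (↑p⁻¹ * ↑x⁻¹ * ↑p⁻¹ : A) ≤ ↑p⁻¹ * (r⁻¹ • (↑p * ↑a⁻¹)) * ↑p⁻¹ :=
        IsSelfAdjoint.conjugate_le_conjugate hx_inv hp_inv.isSelfAdjoint
    _ = r⁻¹ • (↑a⁻¹ * ↑p⁻¹) := by simp
    _ = r⁻¹ • (sqrt (↑p⁻¹ : A) * ↑a⁻¹ * sqrt (↑p⁻¹ : A)) := by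
        rw [← hcomm.eq, mul_assoc, sqrt_mul_sqrt_self _ hp_inv]

lemma CStarAlgebra.conjugate_sqrt_inv_le_of_smul_one_le {a p : Aˣ} {ν : ℝ} (hν : 0 < ν)
    (ha : ν • 1 ≤ (a : A)) (hp : 1 ≤ (p : A)) :
    sqrt (↑p⁻¹ : A) * ↑a⁻¹ * sqrt (↑p⁻¹ : A) ≤ ν⁻¹ • 1 := by
  have hp_inv : 0 ≤ (↑p⁻¹ : A) := CFC.inv_nonneg_of_nonneg p (zero_le_one.trans hp)
  have ha_inv : (↑a⁻¹ : A) ≤ ν⁻¹ • 1 :=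
    inv_le_smul_inv_of_smul_le (a := 1) hν zero_le_one (by simpa using ha)
  calc sqrt (↑p⁻¹ : A) * ↑a⁻¹ * sqrt (↑p⁻¹ : A)
      ≤ sqrt (↑p⁻¹ : A) * (ν⁻¹ • 1) * sqrt (↑p⁻¹ : A) :=
        IsSelfAdjoint.conjugate_le_conjugate ha_inv (sqrt_nonneg _).isSelfAdjoint
    _ = ν⁻¹ • (↑p⁻¹ : A) := by simp [sqrt_mul_sqrt_self _ hp_inv]
    _ ≤ ν⁻¹ • 1 := smul_le_smul_of_nonneg_left (inv_le_one hp) (by positivity)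

end CStarAlgebra

namespace ContinuousLinearMap

lemma norm_apply_le_of_star_mul_self_le {𝕜 E : Type*} [RCLike 𝕜] [NormedAddCommGroup E]
    [InnerProductSpace 𝕜 E] [CompleteSpace E] {B C : E →L[𝕜] E} (h : star B * B ≤ star C * C)
    (x : E) : ‖B x‖ ≤ ‖C x‖ := by
  have hre := ((le_def _ _).1 h).re_inner_nonneg_left x
  rw [sub_apply, inner_sub_left, map_sub, sub_nonneg, star_eq_adjoint, star_eq_adjoint] at hre
  refine (sq_le_sq₀ (norm_nonneg _) (norm_nonneg _)).1 ?_
  rw [apply_norm_sq_eq_inner_adjoint_left, apply_norm_sq_eq_inner_adjoint_left]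
  exact hre

variable {H : Type*} [NormedAddCommGroup H] [InnerProductSpace ℂ H] [CompleteSpace H]

lemma smul_le_of_forall_mul_re_inner_le {X Y : H →L[ℂ] H} {r : ℝ} (hX : IsSelfAdjoint X)
    (hY : IsSelfAdjoint Y) (h : ∀ u, r * (inner ℂ (X u) u).re ≤ (inner ℂ (Y u) u).re) :
    r • X ≤ Y := by
  refine (le_def _ Y).2 (isPositive_def'.2 ⟨hY.sub (.smul (.all r) hX), fun u ↦ ?_⟩)
  simpa [reApplyInnerSelf_apply, inner_sub_left, inner_smul_left_eq_smul] using h u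

lemma norm_apply_le_of_star_mul_self_le_sq_smul {B C : H →L[ℂ] H} {r : ℝ} (hr : 0 ≤ r)
    (h : star B * B ≤ r ^ 2 • (star C * C)) (x : H) : ‖B x‖ ≤ r * ‖C x‖ := by
  have hrC : star (r • C) * (r • C) = r ^ 2 • (star C * C) := by
    rw [star_smul, star_trivial, smul_mul_smul_comm, sq]
  have := norm_apply_le_of_star_mul_self_le (h.trans_eq hrC.symm) x
  rwa [smul_apply, norm_smul, Real.norm_of_nonneg hr] at this

lemma norm_sqrt_inv_apply_inv_le {a p x : (H →L[ℂ] H)ˣ} {t : ℝ} (ht : 0 < t)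
    (ha : 0 ≤ (a : H →L[ℂ] H)) (hp : 0 ≤ (p : H →L[ℂ] H)) (hap : Commute (a : H →L[ℂ] H) p)
    (h : t ^ 2 • ((a : H →L[ℂ] H) * ↑p⁻¹) ≤ x) (v : H) :
    ‖sqrt (↑x⁻¹ : H →L[ℂ] H) ((↑p⁻¹ : H →L[ℂ] H) v)‖
      ≤ t⁻¹ * ‖sqrt (↑a⁻¹ : H →L[ℂ] H) (sqrt (↑p⁻¹ : H →L[ℂ] H) v)‖ := by
  have hp_inv := CFC.inv_nonneg_of_nonneg p hp
  have hx : 0 ≤ (x : H →L[ℂ] H) :=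
    (smul_nonneg (sq_nonneg t) (hap.units_inv_right.mul_nonneg ha hp_inv)).trans h
  refine norm_apply_le_of_star_mul_self_le_sq_smul
    (B := sqrt (↑x⁻¹ : H →L[ℂ] H) * (↑p⁻¹ : H →L[ℂ] H))
    (C := sqrt (↑a⁻¹ : H →L[ℂ] H) * sqrt (↑p⁻¹ : H →L[ℂ] H)) (inv_nonneg.2 ht.le) ?_ v
  rw [star_sqrt_mul_mul_sqrt_mul (CFC.inv_nonneg_of_nonneg x hx),
    star_sqrt_mul_mul_sqrt_mul (CFC.inv_nonneg_of_nonneg a ha), hp_inv.isSelfAdjoint.star_eq,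
    (sqrt_nonneg _).isSelfAdjoint.star_eq, inv_pow]
  exact CStarAlgebra.conjugate_inv_le_of_smul_mul_inv_le (by positivity) ha hp hap h

lemma norm_sqrt_inv_apply_sqrt_inv_le {a p : (H →L[ℂ] H)ˣ} {ν : ℝ} (hν : 0 < ν)
    (ha : ν • 1 ≤ (a : H →L[ℂ] H)) (hp : 1 ≤ (p : H →L[ℂ] H)) (v : H) :
    ‖sqrt (↑a⁻¹ : H →L[ℂ] H) (sqrt (↑p⁻¹ : H →L[ℂ] H) v)‖ ≤ (Real.sqrt ν)⁻¹ * ‖v‖ := by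
  have ha_inv := CFC.inv_nonneg_of_nonneg a ((smul_nonneg hν.le zero_le_one).trans ha)
  have hle : star (sqrt (↑a⁻¹ : H →L[ℂ] H) * sqrt (↑p⁻¹ : H →L[ℂ] H))
        * (sqrt (↑a⁻¹ : H →L[ℂ] H) * sqrt (↑p⁻¹ : H →L[ℂ] H))
      ≤ (Real.sqrt ν)⁻¹ ^ 2 • (star 1 * 1) := by
    rw [star_sqrt_mul_mul_sqrt_mul ha_inv, (sqrt_nonneg _).isSelfAdjoint.star_eq, star_one,
      one_mul, inv_pow, Real.sq_sqrt hν.le]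
    exact CStarAlgebra.conjugate_sqrt_inv_le_of_smul_one_le hν ha hp
  simpa using norm_apply_le_of_star_mul_self_le_sq_smul (by positivity) hle v

end ContinuousLinearMap

open ContinuousLinearMap

set_option synthInstance.maxHeartbeats 1000000 in
theorem inv_sqrt_one_sub_S_mul_S1_estimate_general {H : Type*} [NormedAddCommGroup H]
    [InnerProductSpace ℂ H] [CompleteSpace H]
    (A1 : H →L[ℂ] H) (hA1 : IsSelfAdjoint A1)
    (ν : ℝ) (hν : 0 < ν) (hlow : ∀ u : H, ν * ‖u‖ ^ 2 ≤ (inner ℂ (A1 u) u : ℂ).re)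
    (η1 : ℝ) (hη1 : η1 ∈ Set.Ioo (0 : ℝ) 1) (τ : ℝ) (hτ : 0 < τ)
    (S1 : H →L[ℂ] H)
    (hS1 : S1 * (1 + (τ ^ 2 * η1⁻¹) • A1) = 1) (hS1' : (1 + (τ ^ 2 * η1⁻¹) • A1) * S1 = 1)
    (S : H →L[ℂ] H) (hS : IsSelfAdjoint S)
    (hord : ∀ u : H, η1 * (inner ℂ ((1 - S1) u) u : ℂ).re ≤ (inner ℂ ((1 - S) u) u : ℂ).re)
    (T : H →L[ℂ] H) (hT : T * (1 - S) = 1) (hT' : (1 - S) * T = 1)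
    (A1inv : H →L[ℂ] H) (hA1inv : A1 * A1inv = 1) (hA1inv' : A1inv * A1 = 1) :
    ∀ h : H,
      ‖CFC.sqrt T (S1 h)‖ ≤ τ⁻¹ * ‖CFC.sqrt A1inv (CFC.sqrt S1 h)‖ ∧
      τ⁻¹ * ‖CFC.sqrt A1inv (CFC.sqrt S1 h)‖ ≤ (τ * Real.sqrt ν)⁻¹ * ‖h‖ := by
  intro h
  obtain ⟨hη1, -⟩ := hη1
  let uP : (H →L[ℂ] H)ˣ := ⟨1 + (τ ^ 2 * η1⁻¹) • A1, S1, hS1', hS1⟩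
  let uA1 : (H →L[ℂ] H)ˣ := ⟨A1, A1inv, hA1inv, hA1inv'⟩
  let uX : (H →L[ℂ] H)ˣ := ⟨1 - S, T, hT', hT⟩
  have hA1ν : ν • 1 ≤ A1 := smul_le_of_forall_mul_re_inner_le (.one _) hA1 fun u ↦ by
    simpa [← Complex.ofReal_pow] using hlow u
  have hA1_nonneg : 0 ≤ A1 := (smul_nonneg hν.le zero_le_one).trans hA1ν
  have hP : 1 ≤ (uP : H →L[ℂ] H) :=
    le_add_of_nonneg_right (smul_nonneg (by positivity) hA1_nonneg)
  have hS1_sa : IsSelfAdjoint S1 :=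
    (CFC.inv_nonneg_of_nonneg uP (zero_le_one.trans hP)).isSelfAdjoint
  have hX : τ ^ 2 • (A1 * S1) ≤ 1 - S := by
    have h1S1 : 1 - S1 = (τ ^ 2 * η1⁻¹) • (A1 * S1) := by
      rw [← hS1', add_mul, one_mul, smul_mul_assoc, add_sub_cancel_left]
    have := smul_le_of_forall_mul_re_inner_le ((IsSelfAdjoint.one _).sub hS1_sa)
      ((IsSelfAdjoint.one _).sub hS) hord
    rwa [h1S1, smul_smul, mul_left_comm, mul_inv_cancel₀ hη1.ne', mul_one] at this
  have hA1P : Commute A1 uP := (Commute.one_right A1).add_right ((Commute.refl A1).smul_right _)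
  refine ⟨norm_sqrt_inv_apply_inv_le (a := uA1) (p := uP) (x := uX) hτ hA1_nonneg
    (zero_le_one.trans hP) hA1P hX h, ?_⟩
  calc τ⁻¹ * ‖CFC.sqrt A1inv (CFC.sqrt S1 h)‖ ≤ τ⁻¹ * ((Real.sqrt ν)⁻¹ * ‖h‖) := by
        gcongr
        exact norm_sqrt_inv_apply_sqrt_inv_le (a := uA1) (p := uP) hν hA1ν hP h
    _ = (τ * Real.sqrt ν)⁻¹ * ‖h‖ := by rw [mul_inv, mul_assoc]

set_option synthInstance.maxHeartbeats 1000000 in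
theorem inv_sqrt_one_sub_S_mul_S1_estimate {H : Type*} [NormedAddCommGroup H]
    [InnerProductSpace ℂ H] [CompleteSpace H]
    (A1 : H →L[ℂ] H) (hA1 : IsSelfAdjoint A1)
    (ν : ℝ) (hν : 0 < ν) (hlow : ∀ u : H, ν * ‖u‖ ^ 2 ≤ (inner ℂ (A1 u) u : ℂ).re)
    (η1 : ℝ) (hη1 : η1 ∈ Set.Ioo (0 : ℝ) 1) (τ : ℝ) (hτ : 0 < τ)
    (S1 : H →L[ℂ] H)
    (hS1 : S1 * (1 + (τ ^ 2 * η1⁻¹) • A1) = 1) (hS1' : (1 + (τ ^ 2 * η1⁻¹) • A1) * S1 = 1)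
    (S : H →L[ℂ] H) (hS : IsSelfAdjoint S)
    (hord : ∀ u : H, η1 * (inner ℂ ((1 - S1) u) u : ℂ).re ≤ (inner ℂ ((1 - S) u) u : ℂ).re)
    (hpos : ∀ u : H, u ≠ 0 → 0 < (inner ℂ ((1 - S1) u) u : ℂ).re)
    (T : H →L[ℂ] H) (hT : T * (1 - S) = 1) (hT' : (1 - S) * T = 1)
    (A1inv : H →L[ℂ] H) (hA1inv : A1 * A1inv = 1) (hA1inv' : A1inv * A1 = 1) :
    ∀ h : H,
      ‖CFC.sqrt T (S1 h)‖ ≤ τ⁻¹ * ‖CFC.sqrt A1inv (CFC.sqrt S1 h)‖ ∧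
      τ⁻¹ * ‖CFC.sqrt A1inv (CFC.sqrt S1 h)‖ ≤ (τ * Real.sqrt ν)⁻¹ * ‖h‖ :=
  inv_sqrt_one_sub_S_mul_S1_estimate_general A1 hA1 ν hν hlow η1 hη1 τ hτ S1 hS1 hS1' S hS hord T hT
    hT' A1inv hA1inv hA1inv'
end

section
/- Let U_k denote the Chebyshev polynomial of the second kind and B a bounded self-adjoint operator with spectrum in [0,1]. Setting R_k = B^k U_k(B) (with R_{-1} = 0), one has the identity R_k + B² R_{k-2} - (I + B²) R_{k-1} = -B^{k-1}(I - B²) U_{k-1}(B) for k ≥ 2, and consequently ‖R_k + B² R_{k-2} - (I + B²) R_{k-1}‖ ≤ 1/√k. -/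
open Polynomial Polynomial.Chebyshev

-- t^n (1-t) ≤ 1/(n+1) on [0,1]
lemma tpow_bound (n : ℕ) {t : ℝ} (h0 : 0 ≤ t) (h1 : t ≤ 1) :
    t ^ n * (1 - t) ≤ 1 / (n + 1) := by
  have hsum : ((n : ℝ) + 1) * t ^ n ≤ ∑ i ∈ Finset.range (n + 1), t ^ i := by
    have : ∀ i ∈ Finset.range (n + 1), t ^ n ≤ t ^ i := fun i hi =>
      pow_le_pow_of_le_one h0 h1 (Nat.lt_succ_iff.mp (Finset.mem_range.mp hi))
    calc ((n : ℝ) + 1) * t ^ n = ∑ _i ∈ Finset.range (n + 1), t ^ n := by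
          simp [Finset.sum_const, mul_comm]
      _ ≤ _ := Finset.sum_le_sum this
  have hgeo : (∑ i ∈ Finset.range (n + 1), t ^ i) * (t - 1) = t ^ (n + 1) - 1 :=
    geom_sum_mul t (n + 1)
  have hpow : 0 ≤ t ^ (n + 1) := pow_nonneg h0 _
  have hpos : (0:ℝ) < (n:ℝ) + 1 := by positivity
  rw [le_div_iff₀ hpos]
  nlinarith [mul_le_mul_of_nonneg_right hsum (by linarith : (0:ℝ) ≤ 1 - t)]

lemma cheb_pointwise_bound (n : ℕ) {x : ℝ} (hx : x ∈ Set.Icc (0:ℝ) 1) :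
    |x ^ n * ((1 - x ^ 2) * ((Polynomial.Chebyshev.U ℝ (n : ℤ)).eval x))| ≤
      1 / Real.sqrt (n + 1) := by
  obtain ⟨h0, h1⟩ := hx
  have hx2 : (0:ℝ) ≤ 1 - x ^ 2 := by nlinarith
  set s : ℝ := Real.sqrt (1 - x ^ 2) with hs
  have hs2 : s ^ 2 = 1 - x ^ 2 := Real.sq_sqrt hx2
  have hsnn : 0 ≤ s := Real.sqrt_nonneg _
  -- bound |U n x * s| ≤ 1
  have hUs : |(Polynomial.Chebyshev.U ℝ (n : ℤ)).eval x * s| ≤ 1 := by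
    have hc : Real.cos (Real.arccos x) = x := Real.cos_arccos (by linarith) h1
    have hsin : Real.sin (Real.arccos x) = s := Real.sin_arccos x
    have := Polynomial.Chebyshev.U_real_cos (Real.arccos x) n
    rw [hc, hsin] at this
    rw [this]
    exact Real.abs_sin_le_one _
  -- bound |x^n * s| ≤ 1/√(n+1)
  have hxs : |x ^ n * s| ≤ 1 / Real.sqrt (n + 1) := by
    have hnn : 0 ≤ x ^ n * s := by positivity
    rw [abs_of_nonneg hnn]
    have hsq : (x ^ n * s) ^ 2 ≤ (1 / Real.sqrt (n + 1)) ^ 2 := by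
      have h1s : (1 / Real.sqrt ((n:ℝ) + 1)) ^ 2 = 1 / ((n:ℝ) + 1) := by
        rw [div_pow, one_pow, Real.sq_sqrt (by positivity)]
      rw [h1s, mul_pow, hs2, ← pow_mul]
      have := tpow_bound n (t := x ^ 2) (by positivity) (by nlinarith)
      calc x ^ (n * 2) * (1 - x ^ 2) = (x ^ 2) ^ n * (1 - x ^ 2) := by
            rw [← pow_mul]; ring
        _ ≤ 1 / ((n:ℝ) + 1) := this
    have h := Real.sqrt_le_sqrt hsq
    rwa [Real.sqrt_sq hnn, Real.sqrt_sq (by positivity)] at h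
  have hre : x ^ n * ((1 - x ^ 2) * (Polynomial.Chebyshev.U ℝ (n : ℤ)).eval x)
      = (x ^ n * s) * ((Polynomial.Chebyshev.U ℝ (n : ℤ)).eval x * s) := by
    rw [← hs2]; ring
  rw [hre, abs_mul]
  calc |x ^ n * s| * |(Polynomial.Chebyshev.U ℝ (n : ℤ)).eval x * s|
      ≤ (1 / Real.sqrt (n + 1)) * 1 :=
        mul_le_mul hxs hUs (abs_nonneg _) (by positivity)
    _ = 1 / Real.sqrt (n + 1) := mul_one _

set_option synthInstance.maxHeartbeats 1000000 in
theorem Rk_combination_identity_and_bound {H : Type*} [NormedAddCommGroup H]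
    [InnerProductSpace ℂ H] [CompleteSpace H]
    (B : H →L[ℂ] H) (hB : IsSelfAdjoint B) (hsp : spectrum ℝ B ⊆ Set.Icc 0 1)
    (k : ℕ) (hk : 2 ≤ k)
    (R : ℕ → (H →L[ℂ] H))
    (hR : ∀ n : ℕ, R n = B ^ n * Polynomial.aeval B (Polynomial.Chebyshev.U ℂ n)) :
    R k + B ^ 2 * R (k - 2) - (1 + B ^ 2) * R (k - 1) =
        -(B ^ (k - 1) * ((1 - B ^ 2) *
          Polynomial.aeval B (Polynomial.Chebyshev.U ℂ ((k : ℤ) - 1)))) ∧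
      ‖R k + B ^ 2 * R (k - 2) - (1 + B ^ 2) * R (k - 1)‖ ≤ 1 / Real.sqrt k := by
  obtain ⟨m, rfl⟩ : ∃ m, k = m + 2 := ⟨k - 2, by omega⟩
  have hk2 : m + 2 - 2 = m := by omega
  have hk1 : m + 2 - 1 = m + 1 := by omega
  have hcast : ((m + 2 : ℕ) : ℤ) - 1 = (m : ℤ) + 1 := by push_cast; ring
  have hcast2 : ((m + 2 : ℕ) : ℤ) = (m : ℤ) + 2 := by push_cast; ring
  have hpoly : (X : ℂ[X]) ^ (m + 2) * U ℂ ((m : ℤ) + 2)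
        + X ^ 2 * (X ^ m * U ℂ (m : ℤ))
        - (1 + X ^ 2) * (X ^ (m + 1) * U ℂ ((m : ℤ) + 1))
      = -(X ^ (m + 1) * ((1 - X ^ 2) * U ℂ ((m : ℤ) + 1))) := by
    rw [Polynomial.Chebyshev.U_add_two]; ring
  have hid : R (m + 2) + B ^ 2 * R (m + 2 - 2) - (1 + B ^ 2) * R (m + 2 - 1) =
      -(B ^ (m + 1) * ((1 - B ^ 2) *
        Polynomial.aeval B (Polynomial.Chebyshev.U ℂ ((m : ℤ) + 1)))) := by
    rw [hR, hR, hR, hk2, hk1, hcast2]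
    have hc3 : ((m + 1 : ℕ) : ℤ) = (m : ℤ) + 1 := by push_cast; ring
    rw [hc3]
    have h := congrArg (Polynomial.aeval B) hpoly
    simpa [map_mul, map_add, map_sub, map_pow] using h
  constructor
  · rw [hid, hk1, hcast]
  · rw [hid]
    rw [norm_neg]
    -- switch to real polynomial
    have hreal : Polynomial.aeval B (Polynomial.Chebyshev.U ℂ ((m : ℤ) + 1))
        = Polynomial.aeval B (Polynomial.Chebyshev.U ℝ ((m : ℤ) + 1)) := by
      rw [← Polynomial.Chebyshev.map_U (algebraMap ℝ ℂ), Polynomial.aeval_map_algebraMap]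
    set q : ℝ[X] := X ^ (m + 1) * ((1 - X ^ 2) * U ℝ ((m : ℤ) + 1)) with hq
    have hop : B ^ (m + 1) * ((1 - B ^ 2) *
        Polynomial.aeval B (Polynomial.Chebyshev.U ℂ ((m : ℤ) + 1)))
        = Polynomial.aeval B q := by
      rw [hreal, hq]
      simp [map_mul, map_sub, map_pow]
    rw [hop, ← cfc_polynomial q B hB]
    apply norm_cfc_le (by positivity)
    intro x hx
    have hx01 := hsp hx
    have hb := cheb_pointwise_bound (m + 1) hx01
    have heq : q.eval x = x ^ (m + 1) * ((1 - x ^ 2) *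
        (Polynomial.Chebyshev.U ℝ ((m + 1 : ℕ) : ℤ)).eval x) := by
      have : ((m + 1 : ℕ) : ℤ) = (m : ℤ) + 1 := by push_cast; ring
      rw [this, hq]; simp
    rw [Real.norm_eq_abs, heq]
    convert hb using 3
    push_cast; ring
end
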